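/- arXiv:2209.12078 — 6 statements merged into one kernel-verified Lean document; each statement's English description precedes it below -/
import Mathlib

section
/- (Theorem 1: convergence with instantaneous feedback.) In the multi-player AGD+ setting with Algorithm 1, assume additionally that the step sizes satisfy (a_k)²/A_k ≤ μ_*/L for all k ≥ 1, and let x_* ∈ X be any minimizer of Φ over X. Then for every iteration k ≥ 1, Φ(y_k) − Φ(x_*) ≤ D_ψ(x_*, x_0)/A_k, where x_0 = (x^i_0)_i. -/
open Filter Set

/-- From a strong-convexity-type inequality and differentiability, derive the
gradient lower bound `f u ≥ f u' + Df(u')(u - u') + c ‖u - u'‖²`. -/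
lemma agdp_grad_ineq {F : Type*} [NormedAddCommGroup F] [NormedSpace ℝ F]
    {f : F → ℝ} {u u' : F} {c : ℝ}
    (hf : DifferentiableAt ℝ f u')
    (h : ∀ t : ℝ, 0 ≤ t → t ≤ 1 → f (t • u + (1 - t) • u') ≤
      t * f u + (1 - t) * f u' - c * (t * (1 - t) * ‖u - u'‖ ^ 2)) :
    f u' + fderiv ℝ f u' (u - u') + c * ‖u - u'‖ ^ 2 ≤ f u := by
  set d := u - u' with hd
  have hline : HasDerivAt (fun s : ℝ => u' + s • d) d 0 := by
    simpa using ((hasDerivAt_id (0:ℝ)).smul_const d).const_add u'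
  have hg : HasDerivAt (fun t : ℝ => f (u' + t • d)) (fderiv ℝ f u' d) 0 := by
    have hf' : HasFDerivAt f (fderiv ℝ f u') (u' + (0:ℝ) • d) := by simpa using hf.hasFDerivAt
    have := hf'.comp_hasDerivAt 0 hline
    exact this
  have hslope := hasDerivAt_iff_tendsto_slope.1 hg
  have hslope' : Tendsto (slope (fun t : ℝ => f (u' + t • d)) 0)
      (nhdsWithin 0 (Set.Ioi 0)) (nhds (fderiv ℝ f u' d)) :=
    hslope.mono_left (nhdsWithin_mono 0 (fun t ht => ne_of_gt ht))
  have hrhs : Tendsto (fun t : ℝ => f u - f u' - c * ((1 - t) * ‖d‖ ^ 2))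
      (nhdsWithin 0 (Set.Ioi 0)) (nhds (f u - f u' - c * ‖d‖ ^ 2)) := by
    have : Tendsto (fun t : ℝ => f u - f u' - c * ((1 - t) * ‖d‖ ^ 2)) (nhds 0)
        (nhds (f u - f u' - c * ((1 - (0:ℝ)) * ‖d‖ ^ 2))) := by
      apply Continuous.tendsto
      continuity
    simpa using this.mono_left nhdsWithin_le_nhds
  have hbound : ∀ᶠ t in nhdsWithin (0:ℝ) (Set.Ioi 0),
      slope (fun t : ℝ => f (u' + t • d)) 0 t ≤ f u - f u' - c * ((1 - t) * ‖d‖ ^ 2) := by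
    filter_upwards [Ioo_mem_nhdsGT_of_mem (by constructor <;> norm_num : (0:ℝ) ∈ Set.Ico 0 1)]
      with t ht
    have ht0 : (0:ℝ) < t := ht.1
    have hpt : t • u + (1 - t) • u' = u' + t • d := by rw [hd]; module
    have h1 := h t ht0.le ht.2.le
    rw [hpt] at h1
    have hsl : slope (fun s : ℝ => f (u' + s • d)) 0 t = (f (u' + t • d) - f u') / t := by
      rw [slope_def_field]; simp
    rw [hsl, div_le_iff₀ ht0]
    nlinarith [h1]
  have hfinal : fderiv ℝ f u' d ≤ f u - f u' - c * ‖d‖ ^ 2 :=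
    le_of_tendsto_of_tendsto hslope' hrhs hbound
  linarith

/-- Quadratic growth at a constrained minimizer of a strongly-convex-type function. -/
lemma agdp_quad_growth {F : Type*} [NormedAddCommGroup F] [NormedSpace ℝ F]
    {g : F → ℝ} {s : Set F} (hs : Convex ℝ s) {c : ℝ}
    (hsc : ∀ u ∈ s, ∀ u' ∈ s, ∀ t : ℝ, 0 ≤ t → t ≤ 1 →
      g (t • u + (1 - t) • u') ≤ t * g u + (1 - t) * g u' - c * (t * (1 - t) * ‖u - u'‖ ^ 2))
    {w : F} (hw : w ∈ s) (hmin : ∀ u ∈ s, g w ≤ g u)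
    {u : F} (hu : u ∈ s) : g w + c * ‖u - w‖ ^ 2 ≤ g u := by
  have key : ∀ t : ℝ, t ∈ Set.Ioo (0:ℝ) 1 → c * ((1 - t) * ‖u - w‖ ^ 2) ≤ g u - g w := by
    intro t ht
    have hmem : t • u + (1 - t) • w ∈ s :=
      hs hu hw ht.1.le (by linarith [ht.2]) (by ring)
    have h1 := hsc u hu w hw t ht.1.le ht.2.le
    have h2 := hmin _ hmem
    nlinarith [ht.1]
  have htend : Tendsto (fun t : ℝ => c * ((1 - t) * ‖u - w‖ ^ 2))
      (nhdsWithin 0 (Set.Ioi 0)) (nhds (c * ‖u - w‖ ^ 2)) := by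
    have : Tendsto (fun t : ℝ => c * ((1 - t) * ‖u - w‖ ^ 2)) (nhds 0)
        (nhds (c * ((1 - (0:ℝ)) * ‖u - w‖ ^ 2))) := by
      apply Continuous.tendsto; continuity
    simpa using this.mono_left nhdsWithin_le_nhds
  have hev : ∀ᶠ t in nhdsWithin (0:ℝ) (Set.Ioi 0),
      c * ((1 - t) * ‖u - w‖ ^ 2) ≤ g u - g w := by
    filter_upwards [Ioo_mem_nhdsGT_of_mem (by constructor <;> norm_num : (0:ℝ) ∈ Set.Ico 0 1)]
      with t ht using key t ht
  have := le_of_tendsto htend hev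
  linarith

/-- Smoothness upper bound: `f w ≤ f p + Df(p)(w-p) + L/2 ‖w-p‖²`. -/
lemma agdp_smooth_upper {F : Type*} [NormedAddCommGroup F] [NormedSpace ℝ F]
    {f : F → ℝ} (hf : Differentiable ℝ f) {L : ℝ}
    (hlip : ∀ u u', ‖fderiv ℝ f u - fderiv ℝ f u'‖ ≤ L * ‖u - u'‖)
    (p w : F) : f w ≤ f p + fderiv ℝ f p (w - p) + L / 2 * ‖w - p‖ ^ 2 := by
  set d := w - p with hd
  set g : ℝ → ℝ := fun t => f (p + t • d) - t * fderiv ℝ f p d - L / 2 * t ^ 2 * ‖d‖ ^ 2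
    with hgdef
  have hline : ∀ t : ℝ, HasDerivAt (fun s : ℝ => p + s • d) d t := fun t => by
    simpa using ((hasDerivAt_id t).smul_const d).const_add p
  have hg' : ∀ t : ℝ, HasDerivAt g
      (fderiv ℝ f (p + t • d) d - fderiv ℝ f p d - L / 2 * (2 * t) * ‖d‖ ^ 2) t := by
    intro t
    have h1 : HasDerivAt (fun s : ℝ => f (p + s • d)) (fderiv ℝ f (p + t • d) d) t := by
      have := (hf (p + t • d)).hasFDerivAt.comp_hasDerivAt t (hline t)
      exact this
    have h2 : HasDerivAt (fun s : ℝ => s * fderiv ℝ f p d) (fderiv ℝ f p d) t := by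
      simpa using (hasDerivAt_id t).mul_const (fderiv ℝ f p d)
    have h3 : HasDerivAt (fun s : ℝ => L / 2 * s ^ 2 * ‖d‖ ^ 2)
        (L / 2 * (2 * t) * ‖d‖ ^ 2) t := by
      have h := ((hasDerivAt_pow 2 t).const_mul (L / 2)).mul_const (‖d‖ ^ 2)
      simpa using h
    exact (h1.sub h2).sub h3
  have hmono : AntitoneOn g (Set.Icc 0 1) := by
    apply antitoneOn_of_deriv_nonpos (convex_Icc 0 1)
    · exact Continuous.continuousOn (by
        have : Differentiable ℝ g := fun t => (hg' t).differentiableAt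
        exact this.continuous)
    · intro t _
      exact ((hg' t).differentiableAt).differentiableWithinAt
    · intro t ht
      rw [interior_Icc] at ht
      rw [(hg' t).deriv]
      have hkey : (fderiv ℝ f (p + t • d) - fderiv ℝ f p) d ≤ L * (t * ‖d‖) * ‖d‖ := by
        calc (fderiv ℝ f (p + t • d) - fderiv ℝ f p) d
            ≤ ‖(fderiv ℝ f (p + t • d) - fderiv ℝ f p) d‖ := le_abs_self _
          _ ≤ ‖fderiv ℝ f (p + t • d) - fderiv ℝ f p‖ * ‖d‖ :=
              ContinuousLinearMap.le_opNorm _ _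
          _ ≤ L * ‖p + t • d - p‖ * ‖d‖ := by
              have := hlip (p + t • d) p
              have hdn : (0:ℝ) ≤ ‖d‖ := norm_nonneg _
              nlinarith [this]
          _ = L * (t * ‖d‖) * ‖d‖ := by
              rw [add_sub_cancel_left, norm_smul, Real.norm_eq_abs, abs_of_pos ht.1]
      have hexp : fderiv ℝ f (p + t • d) d - fderiv ℝ f p d
          = (fderiv ℝ f (p + t • d) - fderiv ℝ f p) d := by simp
      rw [hexp]
      nlinarith [hkey]
  have h01 := hmono (Set.left_mem_Icc.2 zero_le_one) (Set.right_mem_Icc.2 zero_le_one)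
    zero_le_one
  have hpd : p + (1:ℝ) • d = w := by rw [hd]; module
  simp only [hgdef, hpd, one_pow, one_mul, zero_pow, zero_smul, add_zero, zero_mul,
    mul_zero, sub_zero] at h01
  norm_num at h01
  linarith

set_option maxHeartbeats 1000000 in
/-- Theorem 1: convergence of the multi-player AGD+ algorithm (Algorithm 1) with
instantaneous feedback: `Φ(y_k) - Φ(x_*) ≤ D_ψ(x_*, x_0) / A_k`. -/
theorem agd_plus_instantaneous_feedback
    {ι : Type*} [Fintype ι] [Nonempty ι] [DecidableEq ι]
    (E : ι → Type*) [∀ i, NormedAddCommGroup (E i)] [∀ i, NormedSpace ℝ (E i)]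
    [∀ i, FiniteDimensional ℝ (E i)]
    -- local strategy spaces: nonempty, closed, convex
    (X : ∀ i, Set (E i))
    (hXne : ∀ i, (X i).Nonempty) (hXcl : ∀ i, IsClosed (X i))
    (hXcv : ∀ i, Convex ℝ (X i))
    -- regularizers: differentiable and μ_i-strongly convex on X i
    (μ : ι → ℝ) (hμ : ∀ i, 0 < μ i)
    (ψ : ∀ i, E i → ℝ) (hψd : ∀ i, Differentiable ℝ (ψ i))
    (hψsc : ∀ i, ∀ u ∈ X i, ∀ u' ∈ X i, ∀ t : ℝ, 0 ≤ t → t ≤ 1 →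
      ψ i (t • u + (1 - t) • u') ≤
        t * ψ i u + (1 - t) * ψ i u' - μ i / 2 * (t * (1 - t) * ‖u - u'‖ ^ 2))
    -- μ_* = min_i μ_i
    (μs : ℝ) (hμs_le : ∀ i, μs ≤ μ i) (hμs_mem : ∃ i, μs = μ i)
    -- the potential: convex and L-smooth on E = ∏_i E_i with the ℓ² product norm
    (L : ℝ) (hL : 0 < L)
    (Φ : PiLp 2 E → ℝ)
    (hΦcv : ConvexOn ℝ Set.univ Φ)
    (hΦd : Differentiable ℝ Φ)
    (hΦsm : ∀ u u' : PiLp 2 E, ‖fderiv ℝ Φ u - fderiv ℝ Φ u'‖ ≤ L * ‖u - u'‖)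
    -- the mirror maps ∇ψ_i^*
    (v : ∀ i, (E i →L[ℝ] ℝ) → E i)
    (hv_mem : ∀ i, ∀ z : E i →L[ℝ] ℝ, v i z ∈ X i)
    (hv_max : ∀ i, ∀ z : E i →L[ℝ] ℝ, ∀ u ∈ X i,
      z u - ψ i u ≤ z (v i z) - ψ i (v i z))
    -- step sizes
    (a : ℕ → ℝ) (ha : ∀ k, 1 ≤ k → 0 < a k)
    (A : ℕ → ℝ) (hA : ∀ k, A k = ∑ t ∈ Finset.Icc 1 k, a t)
    -- the iterates of Algorithm 1
    (x y : ℕ → ∀ i, E i) (z : ℕ → ∀ i, E i →L[ℝ] ℝ)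
    (hx1mem : ∀ i, x 1 i ∈ X i) (hx0 : x 0 = x 1)
    (hz0 : ∀ i, z 0 i = fderiv ℝ (ψ i) (x 0 i))
    (hy0 : y 0 = 0)
    (hz : ∀ k, 1 ≤ k → ∀ i, ∀ u : E i,
      z k i u = z (k - 1) i u -
        a k * fderiv ℝ Φ ((WithLp.equiv 2 (∀ j, E j)).symm (x k))
          ((WithLp.equiv 2 (∀ j, E j)).symm (Pi.single i u)))
    (hy : ∀ k, 1 ≤ k → ∀ i,
      y k i = (A (k - 1) / A k) • y (k - 1) i + (a k / A k) • v i (z k i))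
    (hx : ∀ k, 1 ≤ k → ∀ i,
      x (k + 1) i = (A k / A (k + 1)) • y k i + (a (k + 1) / A (k + 1)) • v i (z k i))
    -- step-size condition (a_k)²/A_k ≤ μ_*/L
    (hstep : ∀ k, 1 ≤ k → (a k) ^ 2 / A k ≤ μs / L)
    -- x_* is a minimizer of Φ over X = ∏_i X_i
    (xstar : ∀ i, E i) (hxstar_mem : ∀ i, xstar i ∈ X i)
    (hxstar_min : ∀ u : ∀ i, E i, (∀ i, u i ∈ X i) →
      Φ ((WithLp.equiv 2 (∀ j, E j)).symm xstar) ≤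
        Φ ((WithLp.equiv 2 (∀ j, E j)).symm u)) :
    ∀ k, 1 ≤ k →
      Φ ((WithLp.equiv 2 (∀ j, E j)).symm (y k)) -
          Φ ((WithLp.equiv 2 (∀ j, E j)).symm xstar) ≤
        ((∑ i, ψ i (xstar i)) - (∑ i, ψ i (x 0 i)) -
            ∑ i, fderiv ℝ (ψ i) (x 0 i) (xstar i - x 0 i)) / A k := by
  classical
  have hμs_pos : 0 < μs := by obtain ⟨i, hi⟩ := hμs_mem; rw [hi]; exact hμ i
  set emb : (∀ j, E j) → PiLp 2 E := ⇑(WithLp.equiv 2 (∀ j, E j)).symm with hembdef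
  -- basic facts about emb
  have embsub : ∀ u w : ∀ i, E i, emb (u - w) = emb u - emb w := fun _ _ => rfl
  have embnorm : ∀ u w : ∀ i, E i, ‖emb u - emb w‖ ^ 2 = ∑ i, ‖u i - w i‖ ^ 2 := by
    intro u w
    rw [← embsub, PiLp.norm_sq_eq_of_L2]
    rfl
  -- pairing: a continuous linear functional on the product decomposes over coordinates
  have hpair : ∀ (Gc : PiLp 2 E →L[ℝ] ℝ) (u : ∀ i, E i),
      Gc (emb u) = ∑ i, Gc (emb (Pi.single i (u i))) := by
    intro Gc u
    have h1 : emb u = ∑ i, emb (Pi.single i (u i)) := by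
      have h2 : u = ∑ i, Pi.single i (u i) := (Finset.univ_sum_single u).symm
      calc emb u = emb (∑ i, Pi.single i (u i)) := by rw [← h2]
        _ = ∑ i, emb (Pi.single i (u i)) :=
            map_sum (WithLp.linearEquiv 2 ℝ (∀ j, E j)).symm _ _
    rw [h1, map_sum]
  -- abbreviations for the algorithm analysis
  set V : ℕ → ∀ i, E i := fun k i => v i (z k i) with hVdef
  set Psi : (∀ i, E i) → ℝ := fun u => ∑ i, ψ i (u i) with hPsidef
  set Z : ℕ → (∀ i, E i) → ℝ := fun k u => ∑ i, z k i (u i) with hZdef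
  set lin : ℕ → (∀ i, E i) → ℝ := fun k u =>
    Φ (emb (x k)) + fderiv ℝ Φ (emb (x k)) (emb u) - fderiv ℝ Φ (emb (x k)) (emb (x k))
    with hlindef
  set D0 : (∀ i, E i) → ℝ := fun u => Psi u - Psi (x 0) - (Z 0 u - Z 0 (x 0)) with hD0def
  set φ : ℕ → (∀ i, E i) → ℝ := fun k u =>
    (∑ t ∈ Finset.Icc 1 k, a t * lin t u) + D0 u with hφdef
  -- facts about step sizes
  have hA0 : A 0 = 0 := by rw [hA]; simp
  have hApos : ∀ k, 1 ≤ k → 0 < A k := by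
    intro k hk
    rw [hA]
    apply Finset.sum_pos
    · intro t ht
      exact ha t (Finset.mem_Icc.1 ht).1
    · exact ⟨1, Finset.mem_Icc.2 ⟨le_refl 1, hk⟩⟩
  have hArec : ∀ k : ℕ, A (k + 1) = A k + a (k + 1) := by
    intro k
    rw [hA, hA, Finset.sum_Icc_succ_top (Nat.le_add_left 1 k)]
  -- recursion for Z
  have hZrec : ∀ k : ℕ, ∀ u : ∀ i, E i,
      Z (k + 1) u = Z k u - a (k + 1) * fderiv ℝ Φ (emb (x (k + 1))) (emb u) := by
    intro k u
    have hcoord : ∀ i, z (k + 1) i (u i) = z k i (u i) -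
        a (k + 1) * fderiv ℝ Φ (emb (x (k + 1))) (emb (Pi.single i (u i))) := by
      intro i
      have h := hz (k + 1) (Nat.le_add_left 1 k) i (u i)
      simpa using h
    simp only [hZdef]
    rw [Finset.sum_congr rfl (fun i _ => hcoord i), Finset.sum_sub_distrib,
      ← Finset.mul_sum, ← hpair (fderiv ℝ Φ (emb (x (k + 1)))) u]
  -- unrolled form of Z
  have hZunroll : ∀ k : ℕ, ∀ u : ∀ i, E i,
      Z k u = Z 0 u - ∑ t ∈ Finset.Icc 1 k, a t * fderiv ℝ Φ (emb (x t)) (emb u) := by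
    intro k
    induction k with
    | zero => intro u; simp
    | succ n ih =>
      intro u
      rw [hZrec n u, ih u, Finset.sum_Icc_succ_top (Nat.le_add_left 1 n)]
      ring
  -- φ difference decomposition
  have hφdiff : ∀ k : ℕ, ∀ u w : ∀ i, E i,
      φ k u - φ k w = (Psi u - Z k u) - (Psi w - Z k w) := by
    intro k u w
    have hsum : ∀ uu : ∀ i, E i, ∑ t ∈ Finset.Icc 1 k, a t * lin t uu
        = (∑ t ∈ Finset.Icc 1 k,
            a t * (Φ (emb (x t)) - fderiv ℝ Φ (emb (x t)) (emb (x t))))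
          + ∑ t ∈ Finset.Icc 1 k, a t * fderiv ℝ Φ (emb (x t)) (emb uu) := by
      intro uu
      rw [← Finset.sum_add_distrib]
      apply Finset.sum_congr rfl
      intro t _
      simp only [hlindef]
      ring
    simp only [hφdef, hD0def]
    rw [hsum u, hsum w, hZunroll k u, hZunroll k w]
    ring
  -- quadratic growth of φ at its minimizer V k
  have hquad : ∀ k : ℕ, ∀ u : ∀ i, E i, (∀ i, u i ∈ X i) →
      φ k (V k) + μs / 2 * ∑ i, ‖u i - V k i‖ ^ 2 ≤ φ k u := by
    intro k u hu
    have key : ∀ i, (ψ i (V k i) - z k i (V k i)) + μ i / 2 * ‖u i - V k i‖ ^ 2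
        ≤ ψ i (u i) - z k i (u i) := by
      intro i
      have hsc' : ∀ p ∈ X i, ∀ q ∈ X i, ∀ t : ℝ, 0 ≤ t → t ≤ 1 →
          (fun w => ψ i w - z k i w) (t • p + (1 - t) • q) ≤
            t * ((fun w => ψ i w - z k i w) p) + (1 - t) * ((fun w => ψ i w - z k i w) q)
            - μ i / 2 * (t * (1 - t) * ‖p - q‖ ^ 2) := by
        intro p hp q hq t ht0 ht1
        have h1 := hψsc i p hp q hq t ht0 ht1
        have h2 : z k i (t • p + (1 - t) • q) = t * z k i p + (1 - t) * z k i q := by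
          rw [map_add, map_smul, map_smul]
          simp [smul_eq_mul]
        simp only
        rw [h2]
        linarith
      have hmin : ∀ p ∈ X i,
          (fun w => ψ i w - z k i w) (v i (z k i)) ≤ (fun w => ψ i w - z k i w) p := by
        intro p hp
        have h := hv_max i (z k i) p hp
        simp only
        linarith
      have h := agdp_quad_growth (g := fun w => ψ i w - z k i w) (c := μ i / 2)
        (hXcv i) hsc' (hv_mem i (z k i)) hmin (hu i)
      simp only [hVdef]
      simpa using h
    have hsum := Finset.sum_le_sum (fun i (_ : i ∈ Finset.univ) => key i)
    rw [Finset.sum_add_distrib] at hsum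
    have hμterm : μs / 2 * ∑ i, ‖u i - V k i‖ ^ 2
        ≤ ∑ i, μ i / 2 * ‖u i - V k i‖ ^ 2 := by
      rw [Finset.mul_sum]
      apply Finset.sum_le_sum
      intro i _
      have h := hμs_le i
      nlinarith [sq_nonneg ‖u i - V k i‖]
    have hdiff := hφdiff k u (V k)
    have hexp : (Psi u - Z k u) - (Psi (V k) - Z k (V k))
        = (∑ i, (ψ i (u i) - z k i (u i))) - ∑ i, (ψ i (V k i) - z k i (V k i)) := by
      simp only [hPsidef, hZdef, Finset.sum_sub_distrib]
    have hchain : μs / 2 * ∑ i, ‖u i - V k i‖ ^ 2 ≤ φ k u - φ k (V k) := by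
      rw [hdiff, hexp]
      linarith [hsum, hμterm]
    linarith [hchain]
  -- gradient inequality for Φ
  have hΦgrad : ∀ k : ℕ, ∀ u : ∀ i, E i, lin k u ≤ Φ (emb u) := by
    intro k u
    have hcv : ∀ t : ℝ, 0 ≤ t → t ≤ 1 →
        Φ (t • emb u + (1 - t) • emb (x k)) ≤
          t * Φ (emb u) + (1 - t) * Φ (emb (x k))
          - 0 * (t * (1 - t) * ‖emb u - emb (x k)‖ ^ 2) := by
      intro t ht0 ht1
      have h : Φ (t • emb u + (1 - t) • emb (x k)) ≤
          t • Φ (emb u) + (1 - t) • Φ (emb (x k)) :=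
        hΦcv.2 (Set.mem_univ (emb u)) (Set.mem_univ (emb (x k))) ht0
          (by linarith) (by ring)
      simp only [smul_eq_mul] at h
      linarith
    have h := agdp_grad_ineq (hΦd (emb (x k))) hcv
    rw [map_sub] at h
    simp only [hlindef]
    linarith
  -- affinity of the linearization
  have hlinaff : ∀ k : ℕ, 1 ≤ k →
      A (k - 1) * lin k (y (k - 1)) + a k * lin k (V k) = A k * lin k (y k) := by
    intro k hk
    have hAk : 0 < A k := hApos k hk
    have hAne : A k ≠ 0 := ne_of_gt hAk
    have hyk : emb (y k) = (A (k - 1) / A k) • emb (y (k - 1)) + (a k / A k) • emb (V k) := by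
      have h : y k = fun i => (A (k - 1) / A k) • y (k - 1) i + (a k / A k) • V k i := by
        funext i
        exact hy k hk i
      rw [h]
      rfl
    have hsum : A (k - 1) + a k = A k := by
      obtain ⟨m, rfl⟩ : ∃ m, k = m + 1 := ⟨k - 1, (Nat.succ_pred_eq_of_pos hk).symm⟩
      simp only [Nat.add_sub_cancel]
      exact (hArec m).symm
    have hmap : fderiv ℝ Φ (emb (x k)) (emb (y k)) =
        (A (k - 1) / A k) * fderiv ℝ Φ (emb (x k)) (emb (y (k - 1)))
        + (a k / A k) * fderiv ℝ Φ (emb (x k)) (emb (V k)) := by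
      rw [hyk, map_add, map_smul, map_smul]
      simp [smul_eq_mul]
    have hmul : A k * fderiv ℝ Φ (emb (x k)) (emb (y k)) =
        A (k - 1) * fderiv ℝ Φ (emb (x k)) (emb (y (k - 1)))
        + a k * fderiv ℝ Φ (emb (x k)) (emb (V k)) := by
      rw [hmap]
      field_simp
    simp only [hlindef]
    linear_combination (Φ (emb (x k)) - fderiv ℝ Φ (emb (x k)) (emb (x k))) * hsum - hmul
  -- Bregman strong convexity bound for the base case
  have hx0mem : ∀ i, x 0 i ∈ X i := by
    intro i
    rw [hx0]
    exact hx1mem i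
  have hbreg : ∀ u : ∀ i, E i, (∀ i, u i ∈ X i) →
      Psi (x 0) + (Z 0 u - Z 0 (x 0)) + μs / 2 * ∑ i, ‖u i - x 0 i‖ ^ 2 ≤ Psi u := by
    intro u hu
    have key : ∀ i, ψ i (x 0 i) + fderiv ℝ (ψ i) (x 0 i) (u i - x 0 i)
        + μ i / 2 * ‖u i - x 0 i‖ ^ 2 ≤ ψ i (u i) := by
      intro i
      exact agdp_grad_ineq (hψd i (x 0 i)) (hψsc i (u i) (hu i) (x 0 i) (hx0mem i))
    have hsum := Finset.sum_le_sum (fun i (_ : i ∈ Finset.univ) => key i)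
    rw [Finset.sum_add_distrib, Finset.sum_add_distrib] at hsum
    have hz0sum : ∑ i, fderiv ℝ (ψ i) (x 0 i) (u i - x 0 i) = Z 0 u - Z 0 (x 0) := by
      simp only [hZdef]
      rw [← Finset.sum_sub_distrib]
      exact Finset.sum_congr rfl fun i _ => by rw [← hz0 i, map_sub]
    have hμterm : μs / 2 * ∑ i, ‖u i - x 0 i‖ ^ 2
        ≤ ∑ i, μ i / 2 * ‖u i - x 0 i‖ ^ 2 := by
      rw [Finset.mul_sum]
      apply Finset.sum_le_sum
      intro i _
      have h := hμs_le i
      nlinarith [sq_nonneg ‖u i - x 0 i‖]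
    simp only [hPsidef]
    linarith [hsum, hz0sum, hμterm]
  -- smoothness upper bound for Φ
  have hsmooth : ∀ k : ℕ, ∀ u : ∀ i, E i,
      Φ (emb u) ≤ lin k u + L / 2 * ‖emb u - emb (x k)‖ ^ 2 := by
    intro k u
    have h := agdp_smooth_upper hΦd hΦsm (emb (x k)) (emb u)
    rw [map_sub] at h
    simp only [hlindef]
    linarith
  -- the invariant
  have hinv : ∀ k : ℕ, 1 ≤ k → A k * Φ (emb (y k)) ≤ φ k (V k) := by
    intro k hk
    induction k, hk using Nat.le_induction with
    | base =>
      have hA1 : A 1 = a 1 := by rw [hA]; simp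
      have ha1 : 0 < a 1 := ha 1 le_rfl
      have hy1 : y 1 = V 1 := by
        funext i
        rw [hy 1 le_rfl i]
        simp [hA0, hA1, div_self (ne_of_gt ha1), hVdef]
      have hφ1 : φ 1 (V 1) = a 1 * lin 1 (V 1) + D0 (V 1) := by
        simp only [hφdef, Finset.Icc_self, Finset.sum_singleton]
      have hsm := hsmooth 1 (V 1)
      have hD0 : μs / 2 * ∑ i, ‖V 1 i - x 0 i‖ ^ 2 ≤ D0 (V 1) := by
        have h := hbreg (V 1) (fun i => hv_mem i (z 1 i))
        simp only [hD0def]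
        linarith
      have hnormeq : ‖emb (V 1) - emb (x 1)‖ ^ 2 = ∑ i, ‖V 1 i - x 0 i‖ ^ 2 := by
        rw [embnorm]
        rw [hx0]
      rw [hnormeq] at hsm
      have hstep1 : a 1 * L ≤ μs := by
        have h := hstep 1 le_rfl
        rw [hA1, sq, mul_div_assoc, div_self (ne_of_gt ha1), mul_one,
          le_div_iff₀ hL] at h
        exact h
      have hsumnn : 0 ≤ ∑ i, ‖V 1 i - x 0 i‖ ^ 2 :=
        Finset.sum_nonneg fun i _ => sq_nonneg _
      rw [hy1, hφ1, hA1]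
      calc a 1 * Φ (emb (V 1))
          ≤ a 1 * (lin 1 (V 1) + L / 2 * ∑ i, ‖V 1 i - x 0 i‖ ^ 2) :=
            mul_le_mul_of_nonneg_left hsm ha1.le
        _ = a 1 * lin 1 (V 1) + a 1 * L * (∑ i, ‖V 1 i - x 0 i‖ ^ 2) / 2 := by ring
        _ ≤ a 1 * lin 1 (V 1) + μs * (∑ i, ‖V 1 i - x 0 i‖ ^ 2) / 2 := by
            have h := mul_le_mul_of_nonneg_right hstep1 hsumnn
            linarith [h]
        _ ≤ a 1 * lin 1 (V 1) + D0 (V 1) := by linarith [hD0]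
    | succ k hk ih =>
      have hAk := hApos k hk
      have hAk1 := hApos (k + 1) (Nat.le_add_left 1 k)
      have hak1 := ha (k + 1) (Nat.le_add_left 1 k)
      have hSnn : 0 ≤ ∑ i, ‖V (k + 1) i - V k i‖ ^ 2 :=
        Finset.sum_nonneg fun i _ => sq_nonneg _
      have hφsplit : φ (k + 1) (V (k + 1)) = φ k (V (k + 1))
          + a (k + 1) * lin (k + 1) (V (k + 1)) := by
        simp only [hφdef]
        rw [Finset.sum_Icc_succ_top (Nat.le_add_left 1 k)]
        ring
      have hgrow := hquad k (V (k + 1)) (fun i => hv_mem i (z (k + 1) i))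
      have hcvx : lin (k + 1) (y k) ≤ Φ (emb (y k)) := hΦgrad (k + 1) (y k)
      have haff := hlinaff (k + 1) (Nat.le_add_left 1 k)
      simp only [Nat.add_sub_cancel] at haff
      have hxk1 : ∀ i, x (k + 1) i = (A k / A (k + 1)) • y k i
          + (a (k + 1) / A (k + 1)) • V k i := fun i => hx k hk i
      have hyk1 : ∀ i, y (k + 1) i = (A k / A (k + 1)) • y k i
          + (a (k + 1) / A (k + 1)) • V (k + 1) i := by
        intro i
        have h := hy (k + 1) (Nat.le_add_left 1 k) i
        simpa [hVdef] using h
      have hdiffnorm : ‖emb (y (k + 1)) - emb (x (k + 1))‖ ^ 2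
          = (a (k + 1) / A (k + 1)) ^ 2 * ∑ i, ‖V (k + 1) i - V k i‖ ^ 2 := by
        have hptwise : ∀ i, y (k + 1) i - x (k + 1) i
            = (a (k + 1) / A (k + 1)) • (V (k + 1) i - V k i) := by
          intro i
          rw [hyk1 i, hxk1 i, smul_sub]
          abel
        rw [embnorm, Finset.mul_sum]
        apply Finset.sum_congr rfl
        intro i _
        rw [hptwise i, norm_smul, mul_pow, Real.norm_eq_abs, sq_abs]
      have hsm := hsmooth (k + 1) (y (k + 1))
      rw [hdiffnorm] at hsm
      have hstepk : L * a (k + 1) ^ 2 / A (k + 1) ≤ μs := by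
        have h := hstep (k + 1) (Nat.le_add_left 1 k)
        rw [div_le_div_iff₀ hAk1 hL] at h
        rw [div_le_iff₀ hAk1]
        linarith
      have e1 : A (k + 1) * (L / 2 * ((a (k + 1) / A (k + 1)) ^ 2
            * ∑ i, ‖V (k + 1) i - V k i‖ ^ 2))
          = L * a (k + 1) ^ 2 / A (k + 1) * (∑ i, ‖V (k + 1) i - V k i‖ ^ 2) / 2 := by
        field_simp
      have m1 := mul_le_mul_of_nonneg_left hsm hAk1.le
      have m2 := mul_le_mul_of_nonneg_left hcvx hAk.le
      have m3 := mul_le_mul_of_nonneg_right hstepk hSnn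
      rw [hφsplit]
      calc A (k + 1) * Φ (emb (y (k + 1)))
          ≤ A (k + 1) * (lin (k + 1) (y (k + 1)) + L / 2 * ((a (k + 1) / A (k + 1)) ^ 2
              * ∑ i, ‖V (k + 1) i - V k i‖ ^ 2)) := m1
        _ = A (k + 1) * lin (k + 1) (y (k + 1))
            + L * a (k + 1) ^ 2 / A (k + 1) * (∑ i, ‖V (k + 1) i - V k i‖ ^ 2) / 2 := by
            rw [mul_add, e1]
        _ ≤ A (k + 1) * lin (k + 1) (y (k + 1))
            + μs * (∑ i, ‖V (k + 1) i - V k i‖ ^ 2) / 2 := by linarith [m3]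
        _ = A k * lin (k + 1) (y k) + a (k + 1) * lin (k + 1) (V (k + 1))
            + μs * (∑ i, ‖V (k + 1) i - V k i‖ ^ 2) / 2 := by rw [← haff]
        _ = A k * lin (k + 1) (y k) + (a (k + 1) * lin (k + 1) (V (k + 1))
            + μs / 2 * ∑ i, ‖V (k + 1) i - V k i‖ ^ 2) := by ring
        _ ≤ φ k (V k) + (a (k + 1) * lin (k + 1) (V (k + 1))
            + μs / 2 * ∑ i, ‖V (k + 1) i - V k i‖ ^ 2) :=
            add_le_add_left (le_trans m2 ih) _
        _ = φ k (V k) + μs / 2 * (∑ i, ‖V (k + 1) i - V k i‖ ^ 2)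
            + a (k + 1) * lin (k + 1) (V (k + 1)) := by ring
        _ ≤ φ k (V (k + 1)) + a (k + 1) * lin (k + 1) (V (k + 1)) :=
            add_le_add_left hgrow _
  -- conclusion
  intro k hk
  have hAk := hApos k hk
  have h1 : A k * Φ (emb (y k)) ≤ φ k (V k) := hinv k hk
  have h2 : φ k (V k) ≤ φ k xstar := by
    have := hquad k xstar hxstar_mem
    have hnn : 0 ≤ μs / 2 * ∑ i, ‖xstar i - V k i‖ ^ 2 := by
      apply mul_nonneg
      · exact div_nonneg hμs_pos.le (by norm_num)
      · exact Finset.sum_nonneg fun i _ => sq_nonneg _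
    exact le_trans (le_add_of_nonneg_right hnn) this
  have h3 : φ k xstar ≤ A k * Φ (emb xstar) + D0 xstar := by
    simp only [hφdef]
    have hbound : ∑ t ∈ Finset.Icc 1 k, a t * lin t xstar
        ≤ ∑ t ∈ Finset.Icc 1 k, a t * Φ (emb xstar) := by
      apply Finset.sum_le_sum
      intro t ht
      exact mul_le_mul_of_nonneg_left (hΦgrad t xstar)
        (ha t (Finset.mem_Icc.1 ht).1).le
    rw [← Finset.sum_mul, ← hA k] at hbound
    linarith [hbound]
  have hgoal : A k * Φ (emb (y k)) ≤ A k * Φ (emb xstar) + D0 xstar := by linarith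
  have hD0x : D0 xstar = (∑ i, ψ i (xstar i)) - (∑ i, ψ i (x 0 i)) -
      ∑ i, fderiv ℝ (ψ i) (x 0 i) (xstar i - x 0 i) := by
    have hZ0s : (∑ i, fderiv ℝ (ψ i) (x 0 i) (xstar i - x 0 i)) = Z 0 xstar - Z 0 (x 0) := by
      simp only [hZdef]
      rw [← Finset.sum_sub_distrib]
      exact Finset.sum_congr rfl fun i _ => by rw [← hz0 i, map_sub]
    simp only [hD0def, hPsidef]
    rw [hZ0s]
  rw [← hD0x, le_div_iff₀ hAk]
  nlinarith [hgoal]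
end

section
/- (Subsequent partial-gradient difference bound.) In the multi-player AGD+ setting with Algorithm 2, for every player i and every iteration ℓ ≥ 1, the partial gradients g^i_ℓ = D_iΦ(x_ℓ) satisfy ‖g^i_{ℓ+1} − g^i_ℓ‖_{*,i} ≤ L·D_X·(a_ℓ + a_{ℓ+1})/A_{ℓ+1}, where ‖·‖_{*,i} denotes the dual norm on the continuous dual of E_i and D_X is the diameter of X. -/
/-- Lemma: in the multi-player AGD+ setting with Algorithm 2 (delayed feedback), the
partial gradients `g^i_ℓ = D_iΦ(x_ℓ)` of consecutive iterates satisfy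
`‖g^i_{ℓ+1} - g^i_ℓ‖_{*,i} ≤ L·D_X·(a_ℓ + a_{ℓ+1})/A_{ℓ+1}`. -/
theorem agd_plus_partial_gradient_difference_bound
    {ι : Type*} [Fintype ι] [Nonempty ι] [DecidableEq ι]
    (E : ι → Type*) [∀ i, NormedAddCommGroup (E i)] [∀ i, NormedSpace ℝ (E i)]
    [∀ i, FiniteDimensional ℝ (E i)]
    -- local strategy spaces: nonempty, closed, convex, bounded
    (X : ∀ i, Set (E i))
    (hXne : ∀ i, (X i).Nonempty) (hXcl : ∀ i, IsClosed (X i))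
    (hXcv : ∀ i, Convex ℝ (X i)) (hXbd : ∀ i, Bornology.IsBounded (X i))
    -- regularizers: differentiable and μ_i-strongly convex on X i
    (μ : ι → ℝ) (hμ : ∀ i, 0 < μ i)
    (ψ : ∀ i, E i → ℝ) (hψd : ∀ i, Differentiable ℝ (ψ i))
    (hψsc : ∀ i, ∀ u ∈ X i, ∀ u' ∈ X i, ∀ t : ℝ, 0 ≤ t → t ≤ 1 →
      ψ i (t • u + (1 - t) • u') ≤
        t * ψ i u + (1 - t) * ψ i u' - μ i / 2 * (t * (1 - t) * ‖u - u'‖ ^ 2))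
    -- μ_* = min_i μ_i
    (μs : ℝ) (hμs_le : ∀ i, μs ≤ μ i) (hμs_mem : ∃ i, μs = μ i)
    -- the potential: convex and L-smooth on E = ∏_i E_i with the ℓ² product norm
    (L : ℝ) (hL : 0 < L)
    (Φ : PiLp 2 E → ℝ)
    (hΦcv : ConvexOn ℝ Set.univ Φ)
    (hΦd : Differentiable ℝ Φ)
    (hΦsm : ∀ u u' : PiLp 2 E, ‖fderiv ℝ Φ u - fderiv ℝ Φ u'‖ ≤ L * ‖u - u'‖)
    -- the mirror maps ∇ψ_i^*
    (v : ∀ i, (E i →L[ℝ] ℝ) → E i)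
    (hv_mem : ∀ i, ∀ z : E i →L[ℝ] ℝ, v i z ∈ X i)
    (hv_max : ∀ i, ∀ z : E i →L[ℝ] ℝ, ∀ u ∈ X i,
      z u - ψ i u ≤ z (v i z) - ψ i (v i z))
    -- delays: d^i_t ≤ D·t^α
    (D α : ℝ) (hD : 0 < D) (hα0 : 0 ≤ α)
    (d : ι → ℕ → ℕ)
    (hd : ∀ i, ∀ t : ℕ, 1 ≤ t → (d i t : ℝ) ≤ D * (t : ℝ) ^ α)
    (s : ι → ℕ → ℕ)
    (hs : ∀ i, ∀ k : ℕ, 1 ≤ k →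
      s i k = sSup ({1} ∪ {t : ℕ | 1 ≤ t ∧ t ≤ k ∧ t + d i t ≤ k}))
    -- step sizes
    (a : ℕ → ℝ) (ha : ∀ k, 1 ≤ k → 0 < a k)
    (A : ℕ → ℝ) (hA : ∀ k, A k = ∑ t ∈ Finset.Icc 1 k, a t)
    -- the iterates of Algorithm 2 (delayed feedback)
    (x y : ℕ → ∀ i, E i) (z : ℕ → ∀ i, E i →L[ℝ] ℝ)
    (hx1mem : ∀ i, x 1 i ∈ X i) (hx0 : x 0 = x 1)
    (hz0 : ∀ i, z 0 i = fderiv ℝ (ψ i) (x 0 i))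
    (hy0 : y 0 = 0)
    (hz : ∀ k, 1 ≤ k → ∀ i, ∀ u : E i,
      z k i u = z (k - 1) i u -
        a k * fderiv ℝ Φ ((WithLp.equiv 2 (∀ j, E j)).symm (x (s i k)))
          ((WithLp.equiv 2 (∀ j, E j)).symm (Pi.single i u)))
    (hy : ∀ k, 1 ≤ k → ∀ i,
      y k i = (A (k - 1) / A k) • y (k - 1) i + (a k / A k) • v i (z k i))
    (hx : ∀ k, 1 ≤ k → ∀ i,
      x (k + 1) i = (A k / A (k + 1)) • y k i + (a (k + 1) / A (k + 1)) • v i (z k i)) :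
    ∀ i : ι, ∀ ℓ : ℕ, 1 ≤ ℓ →
      -- ‖g^i_{ℓ+1} - g^i_ℓ‖_{*,i} ≤ L·D_X·(a_ℓ + a_{ℓ+1})/A_{ℓ+1}
      ‖(fderiv ℝ Φ ((WithLp.equiv 2 (∀ j, E j)).symm (x (ℓ + 1)))).comp
            ((PiLp.continuousLinearEquiv 2 ℝ E).symm.toContinuousLinearMap.comp
              (LinearMap.toContinuousLinearMap (LinearMap.single ℝ E i))) -
          (fderiv ℝ Φ ((WithLp.equiv 2 (∀ j, E j)).symm (x ℓ))).comp
            ((PiLp.continuousLinearEquiv 2 ℝ E).symm.toContinuousLinearMap.comp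
              (LinearMap.toContinuousLinearMap (LinearMap.single ℝ E i)))‖ ≤
        L * Metric.diam ((WithLp.equiv 2 (∀ j, E j)).symm ''
            {u : ∀ j, E j | ∀ i, u i ∈ X i}) *
          (a ℓ + a (ℓ + 1)) / A (ℓ + 1) := by
  classical
  intro i ℓ hℓ
  set eqs := (WithLp.equiv 2 (∀ j, E j)).symm with heqs
  -- basic facts about A
  have hA0 : A 0 = 0 := by simp [hA]
  have hA1 : A 1 = a 1 := by simp [hA]
  have hAs : ∀ k : ℕ, A (k + 1) = A k + a (k + 1) := by
    intro k
    rw [hA (k + 1), hA k, Finset.sum_Icc_succ_top (by omega : 1 ≤ k + 1)]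
  have hApos : ∀ k : ℕ, 1 ≤ k → 0 < A k := by
    intro k hk
    rw [hA]
    apply Finset.sum_pos
    · intro t ht
      exact ha t (Finset.mem_Icc.mp ht).1
    · exact ⟨1, Finset.mem_Icc.mpr ⟨le_rfl, hk⟩⟩
  -- membership of the iterates
  have hyX : ∀ k : ℕ, 1 ≤ k → ∀ j, y k j ∈ X j := by
    intro k
    induction k with
    | zero => omega
    | succ m ih =>
      intro _ j
      rcases Nat.eq_zero_or_pos m with hm | hm
      · subst hm
        have h1 := hy 1 le_rfl j
        simp only [Nat.sub_self, hA0, zero_div, zero_smul, zero_add] at h1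
        rw [h1, hA1, div_self (ne_of_gt (ha 1 le_rfl)), one_smul]
        exact hv_mem j _
      · have h1 := hy (m + 1) (by omega) j
        simp only [Nat.add_sub_cancel] at h1
        rw [h1]
        have hApos' : 0 < A (m + 1) := hApos (m + 1) (by omega)
        refine hXcv j (ih hm j) (hv_mem j _) ?_ ?_ ?_
        · exact div_nonneg (le_of_lt (hApos m hm)) hApos'.le
        · exact div_nonneg (ha (m + 1) (by omega)).le hApos'.le
        · rw [← add_div, ← hAs m, div_self hApos'.ne']
  have hxX : ∀ k : ℕ, 1 ≤ k → ∀ j, x k j ∈ X j := by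
    intro k
    induction k with
    | zero => omega
    | succ m _ =>
      intro _ j
      rcases Nat.eq_zero_or_pos m with hm | hm
      · subst hm; exact hx1mem j
      · rw [hx m hm j]
        have hApos' : 0 < A (m + 1) := hApos (m + 1) (by omega)
        refine hXcv j (hyX m hm j) (hv_mem j _) ?_ ?_ ?_
        · exact div_nonneg (le_of_lt (hApos m hm)) hApos'.le
        · exact div_nonneg (ha (m + 1) (by omega)).le hApos'.le
        · rw [← add_div, ← hAs m, div_self hApos'.ne']
  -- the comparison point w
  set w : ∀ j, E j := if ℓ = 1 then x 1 else fun j => v j (z (ℓ - 1) j) with hw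
  have hwX : ∀ j, w j ∈ X j := by
    intro j
    by_cases h1 : ℓ = 1 <;> simp [hw, h1, hx1mem j, hv_mem j]
  -- key componentwise identity
  have hkey : ∀ j, x (ℓ + 1) j - x ℓ j =
      (a ℓ / A (ℓ + 1)) • (v j (z ℓ j) - w j) +
      (a (ℓ + 1) / A (ℓ + 1)) • (v j (z ℓ j) - x ℓ j) := by
    intro j
    have hA2pos : 0 < A (ℓ + 1) := hApos (ℓ + 1) (by omega)
    have hA1pos : 0 < A ℓ := hApos ℓ hℓ
    rcases eq_or_lt_of_le hℓ with h1 | h1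
    · -- ℓ = 1
      subst h1
      have hy1 := hy 1 le_rfl j
      rw [Nat.sub_self, hA0, zero_div, zero_smul, zero_add, hA1,
        div_self (ha 1 le_rfl).ne', one_smul] at hy1
      have hx2 := hx 1 le_rfl j
      rw [hy1] at hx2
      rw [hx2]
      simp only [hw]
      simp only [if_true]
      have h2 : A (1 + 1) = a 1 + a (1 + 1) := by rw [hAs 1, hA1]
      have hne : a 1 + a (1 + 1) ≠ 0 :=
        (add_pos (ha 1 le_rfl) (ha (1 + 1) (by omega))).ne'
      rw [h2, hA1]
      match_scalars <;> field_simp [hne] <;> ring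
    · -- ℓ ≥ 2
      obtain ⟨m, rfl⟩ : ∃ m, ℓ = m + 1 := ⟨ℓ - 1, by omega⟩
      have hm : 1 ≤ m := by omega
      have hx2 := hx (m + 1) (by omega) j
      have hy2 := hy (m + 1) (by omega) j
      simp only [Nat.add_sub_cancel] at hy2
      have hx1' := hx m hm j
      simp only [hw]
      rw [if_neg (by omega : ¬ m + 1 = 1)]
      simp only [Nat.add_sub_cancel]
      rw [hx2, hy2, hx1']
      have e1 : A (m + 1 + 1) = A (m + 1) + a (m + 1 + 1) := hAs (m + 1)
      have n1 : A (m + 1) ≠ 0 := (hApos (m + 1) (by omega)).ne'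
      have n2 : A (m + 1) + a (m + 1 + 1) ≠ 0 := by
        rw [← e1]; exact (hApos (m + 1 + 1) (by omega)).ne'
      rw [e1]
      match_scalars <;> field_simp [n1, n2] <;> ring
  -- boundedness and diameter facts
  set S : Set (PiLp 2 E) := eqs '' {u : ∀ j, E j | ∀ i, u i ∈ X i} with hS
  have hSbd : Bornology.IsBounded S := by
    have hbd : Bornology.IsBounded (Set.pi Set.univ X) :=
      Bornology.IsBounded.pi hXbd
    have hset : {u : ∀ j, E j | ∀ i, u i ∈ X i} = Set.pi Set.univ X := by
      ext u; simp [Set.mem_pi]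
    rw [hS, hset]
    exact ((PiLp.continuousLinearEquiv 2 ℝ E).symm.toContinuousLinearMap.lipschitz).isBounded_image hbd
  have hdiam : ∀ p q : ∀ j, E j, (∀ j, p j ∈ X j) → (∀ j, q j ∈ X j) →
      ‖eqs p - eqs q‖ ≤ Metric.diam S := by
    intro p q hp hq
    rw [← dist_eq_norm]
    exact Metric.dist_le_diam_of_mem hSbd ⟨p, hp, rfl⟩ ⟨q, hq, rfl⟩
  have hdiam0 : 0 ≤ Metric.diam S := Metric.diam_nonneg
  -- the vector identity in PiLp
  have hA2pos : 0 < A (ℓ + 1) := hApos (ℓ + 1) (by omega)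
  set c₁ : ℝ := a ℓ / A (ℓ + 1) with hc₁
  set c₂ : ℝ := a (ℓ + 1) / A (ℓ + 1) with hc₂
  have hc₁0 : 0 ≤ c₁ := div_nonneg (ha ℓ hℓ).le hA2pos.le
  have hc₂0 : 0 ≤ c₂ := div_nonneg (ha (ℓ + 1) (by omega)).le hA2pos.le
  set V : ∀ j, E j := fun j => v j (z ℓ j) with hV
  have hvec : eqs (x (ℓ + 1)) - eqs (x ℓ) =
      c₁ • (eqs V - eqs w) + c₂ • (eqs V - eqs (x ℓ)) := by
    ext j
    simp only [PiLp.sub_apply, PiLp.add_apply, PiLp.smul_apply, heqs,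
      WithLp.equiv_symm_apply, PiLp.toLp_apply]
    exact hkey j
  have hnorm : ‖eqs (x (ℓ + 1)) - eqs (x ℓ)‖ ≤ (c₁ + c₂) * Metric.diam S := by
    rw [hvec]
    calc ‖c₁ • (eqs V - eqs w) + c₂ • (eqs V - eqs (x ℓ))‖
        ≤ ‖c₁ • (eqs V - eqs w)‖ + ‖c₂ • (eqs V - eqs (x ℓ))‖ := norm_add_le _ _
      _ = c₁ * ‖eqs V - eqs w‖ + c₂ * ‖eqs V - eqs (x ℓ)‖ := by
          rw [norm_smul, norm_smul, Real.norm_eq_abs, Real.norm_eq_abs,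
            abs_of_nonneg hc₁0, abs_of_nonneg hc₂0]
      _ ≤ c₁ * Metric.diam S + c₂ * Metric.diam S := by
          gcongr
          · exact hdiam _ _ (fun j => hv_mem j _) hwX
          · exact hdiam _ _ (fun j => hv_mem j _) (hxX ℓ hℓ)
      _ = (c₁ + c₂) * Metric.diam S := by ring
  -- the operator norm of the embedding
  set T : E i →L[ℝ] PiLp 2 E :=
    (PiLp.continuousLinearEquiv 2 ℝ E).symm.toContinuousLinearMap.comp
      (LinearMap.toContinuousLinearMap (LinearMap.single ℝ E i)) with hT
  have hTnorm : ‖T‖ ≤ 1 := by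
    apply ContinuousLinearMap.opNorm_le_bound _ zero_le_one
    intro u
    have : T u = (WithLp.equiv 2 (∀ j, E j)).symm (Pi.single i u) := rfl
    rw [this, WithLp.equiv_symm_apply, PiLp.norm_toLp_single, one_mul]
  -- put it together
  set F := fderiv ℝ Φ (eqs (x (ℓ + 1))) with hF
  set G := fderiv ℝ Φ (eqs (x ℓ)) with hG
  have hcomp : ‖F.comp T - G.comp T‖ ≤ ‖F - G‖ := by
    rw [← ContinuousLinearMap.sub_comp]
    calc ‖(F - G).comp T‖ ≤ ‖F - G‖ * ‖T‖ := ContinuousLinearMap.opNorm_comp_le _ _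
      _ ≤ ‖F - G‖ * 1 := mul_le_mul_of_nonneg_left hTnorm (norm_nonneg _)
      _ = ‖F - G‖ := mul_one _
  have hFG : ‖F - G‖ ≤ L * ‖eqs (x (ℓ + 1)) - eqs (x ℓ)‖ := hΦsm _ _
  calc ‖F.comp T - G.comp T‖ ≤ ‖F - G‖ := hcomp
    _ ≤ L * ‖eqs (x (ℓ + 1)) - eqs (x ℓ)‖ := hFG
    _ ≤ L * ((c₁ + c₂) * Metric.diam S) := by gcongr
    _ = L * Metric.diam S * (a ℓ + a (ℓ + 1)) / A (ℓ + 1) := by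
        rw [hc₁, hc₂, ← add_div]
        field_simp
end

section
/- (Per-iteration error bound of AGD+.) Let E be a finite-dimensional real normed space with dual norm ‖·‖_* on its continuous dual, X ⊆ E a convex set, L, μ, a > 0 and A_prev ≥ 0 with A = A_prev + a. Let Φ : E → ℝ be differentiable with ‖DΦ(u) − DΦ(u')‖_* ≤ L·‖u − u'‖ for all u, u' ∈ E, and let ψ : E → ℝ be a differentiable function that is μ-strongly convex on X with respect to ‖·‖. Let y_prev, v', v ∈ X and set x = (A_prev/A)·y_prev + (a/A)·v' and y = (A_prev/A)·y_prev + (a/A)·v. Then A·(Φ(y) − Φ(x) − DΦ(x)(y − x)) − D_ψ(v, v') ≤ (1/2)·(L·a²/A − μ)·‖v − v'‖², where D_ψ(u, u') = ψ(u) − ψ(u') − Dψ(u')(u − u') is the Bregman divergence of ψ. -/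
open Set Filter Topology

/-- Descent lemma: if the derivative of `Φ` is `L`-Lipschitz (in operator norm),
then `Φ y - Φ x - DΦ(x)(y - x) ≤ L/2 ‖y - x‖²`. -/
lemma agd_descent_lemma {E : Type*} [NormedAddCommGroup E] [NormedSpace ℝ E]
    (L : ℝ) (Φ : E → ℝ) (hΦd : Differentiable ℝ Φ)
    (hΦsm : ∀ u u' : E, ‖fderiv ℝ Φ u - fderiv ℝ Φ u'‖ ≤ L * ‖u - u'‖)
    (x y : E) :
    Φ y - Φ x - fderiv ℝ Φ x (y - x) ≤ L / 2 * ‖y - x‖ ^ 2 := by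
  set w := y - x with hw
  set c : ℝ := fderiv ℝ Φ x w with hc
  set K : ℝ := ‖w‖ ^ 2 with hK
  set g : ℝ → ℝ := fun t => Φ (x + t • w) - t * c - L / 2 * K * t ^ 2 with hg
  have hder : ∀ t : ℝ, HasDerivAt g
      (fderiv ℝ Φ (x + t • w) w - c - L * K * t) t := by
    intro t
    have h1 : HasDerivAt (fun t : ℝ => x + t • w) w t := by
      simpa using ((hasDerivAt_id t).smul_const w).const_add x
    have h2 : HasDerivAt (fun t => Φ (x + t • w)) (fderiv ℝ Φ (x + t • w) w) t :=
      (hΦd (x + t • w)).hasFDerivAt.comp_hasDerivAt t h1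
    have h3 : HasDerivAt (fun t : ℝ => t * c) c t := by
      simpa using (hasDerivAt_id t).mul_const c
    have h4 : HasDerivAt (fun t : ℝ => L / 2 * K * t ^ 2) (L * K * t) t := by
      have := (hasDerivAt_pow 2 t).const_mul (L / 2 * K)
      refine this.congr_deriv ?_
      push_cast
      ring
    exact (h2.sub h3).sub h4
  have hgd : Differentiable ℝ g := fun t => (hder t).differentiableAt
  have hmono : AntitoneOn g (Icc (0 : ℝ) 1) := by
    apply antitoneOn_of_deriv_nonpos (convex_Icc 0 1) (hgd.continuous.continuousOn)
      (hgd.differentiableOn)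
    intro t ht
    rw [interior_Icc] at ht
    rw [(hder t).deriv]
    have hb : fderiv ℝ Φ (x + t • w) w - c ≤ L * t * ‖w‖ ^ 2 := by
      have h1 : fderiv ℝ Φ (x + t • w) w - c =
          (fderiv ℝ Φ (x + t • w) - fderiv ℝ Φ x) w := by
        simp [hc]
      have h2 : (fderiv ℝ Φ (x + t • w) - fderiv ℝ Φ x) w ≤
          ‖fderiv ℝ Φ (x + t • w) - fderiv ℝ Φ x‖ * ‖w‖ :=
        le_trans (le_abs_self _) ((fderiv ℝ Φ (x + t • w) - fderiv ℝ Φ x).le_opNorm w)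
      have h3 : ‖fderiv ℝ Φ (x + t • w) - fderiv ℝ Φ x‖ ≤ L * (t * ‖w‖) := by
        have := hΦsm (x + t • w) x
        simpa [norm_smul, abs_of_pos ht.1] using this
      have h4 : ‖fderiv ℝ Φ (x + t • w) - fderiv ℝ Φ x‖ * ‖w‖ ≤ L * (t * ‖w‖) * ‖w‖ :=
        mul_le_mul_of_nonneg_right h3 (norm_nonneg _)
      nlinarith [h1, h2]
    simp only [hK]
    linarith
  have h01 : g 1 ≤ g 0 := hmono (by norm_num) (by norm_num) (by norm_num)
  have hg0 : g 0 = Φ x := by simp [hg]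
  have hg1 : g 1 = Φ y - c - L / 2 * K := by
    simp [hg, hw]
  rw [hg0, hg1] at h01
  have : fderiv ℝ Φ x (y - x) = c := rfl
  linarith [h01]

/-- Strong convexity gives a lower bound on the Bregman divergence. -/
lemma agd_strong_bregman {E : Type*} [NormedAddCommGroup E] [NormedSpace ℝ E]
    (X : Set E) (μ : ℝ)
    (ψ : E → ℝ) (hψd : Differentiable ℝ ψ)
    (hψsc : ∀ u ∈ X, ∀ u' ∈ X, ∀ t : ℝ, 0 ≤ t → t ≤ 1 →
      ψ (t • u + (1 - t) • u') ≤
        t * ψ u + (1 - t) * ψ u' - μ / 2 * (t * (1 - t) * ‖u - u'‖ ^ 2))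
    (v' v : E) (hv' : v' ∈ X) (hv : v ∈ X) :
    μ / 2 * ‖v - v'‖ ^ 2 ≤ ψ v - ψ v' - fderiv ℝ ψ v' (v - v') := by
  set w := v - v' with hw
  set K : ℝ := ‖w‖ ^ 2 with hK
  set h : ℝ → ℝ := fun t => ψ (v' + t • w) with hh
  have hder : HasDerivAt h (fderiv ℝ ψ v' w) 0 := by
    have h1 : HasDerivAt (fun t : ℝ => v' + t • w) w 0 := by
      simpa using ((hasDerivAt_id (0:ℝ)).smul_const w).const_add v'
    have := (hψd (v' + (0:ℝ) • w)).hasFDerivAt.comp_hasDerivAt 0 h1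
    rw [zero_smul, add_zero] at this
    exact this
  have hslope : Tendsto (slope h 0) (𝓝[>] 0) (𝓝 (fderiv ℝ ψ v' w)) :=
    (hasDerivAt_iff_tendsto_slope.mp hder).mono_left
      (nhdsWithin_mono 0 (fun t ht => ne_of_gt ht))
  have hbound : ∀ᶠ t in 𝓝[>] (0:ℝ),
      slope h 0 t ≤ ψ v - ψ v' - μ / 2 * ((1 - t) * K) := by
    filter_upwards [Ioo_mem_nhdsGT_of_mem (by norm_num : (0:ℝ) ∈ Ico 0 1)] with t ht
    have ht0 : 0 < t := ht.1
    have ht1 : t ≤ 1 := le_of_lt ht.2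
    have key := hψsc v hv v' hv' t (le_of_lt ht0) ht1
    have heq : t • v + (1 - t) • v' = v' + t • w := by
      simp [hw, smul_sub, sub_smul]; abel
    rw [heq] at key
    have hht : h t ≤ t * ψ v + (1 - t) * ψ v' - μ / 2 * (t * (1 - t) * K) := key
    have hh0 : h 0 = ψ v' := by simp [hh]
    rw [slope_def_field, hh0, sub_zero, div_le_iff₀ ht0]
    nlinarith [hht]
  have hlim2 : Tendsto (fun t : ℝ => ψ v - ψ v' - μ / 2 * ((1 - t) * K)) (𝓝[>] 0)
      (𝓝 (ψ v - ψ v' - μ / 2 * K)) := by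
    have hc : Continuous (fun t : ℝ => ψ v - ψ v' - μ / 2 * ((1 - t) * K)) := by
      continuity
    have h2 : Tendsto (fun t : ℝ => ψ v - ψ v' - μ / 2 * ((1 - t) * K)) (𝓝[>] 0)
        (𝓝 (ψ v - ψ v' - μ / 2 * ((1 - 0) * K))) :=
      (hc.tendsto 0).mono_left nhdsWithin_le_nhds
    simpa using h2
  have hfin : fderiv ℝ ψ v' w ≤ ψ v - ψ v' - μ / 2 * K :=
    le_of_tendsto_of_tendsto hslope hlim2 hbound
  linarith [hfin]


/-- Per-iteration error bound of AGD+: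
`A·(Φ(y) - Φ(x) - DΦ(x)(y - x)) - D_ψ(v, v') ≤ (1/2)·(L·a²/A - μ)·‖v - v'‖²`. -/
theorem agd_plus_per_iteration_error_bound
    {E : Type*} [NormedAddCommGroup E] [NormedSpace ℝ E] [FiniteDimensional ℝ E]
    (X : Set E) (hXcv : Convex ℝ X)
    (L μ a Aprev : ℝ) (hL : 0 < L) (hμ : 0 < μ) (ha : 0 < a) (hAprev : 0 ≤ Aprev)
    (A : ℝ) (hA : A = Aprev + a)
    (Φ : E → ℝ) (hΦd : Differentiable ℝ Φ)
    (hΦsm : ∀ u u' : E, ‖fderiv ℝ Φ u - fderiv ℝ Φ u'‖ ≤ L * ‖u - u'‖)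
    (ψ : E → ℝ) (hψd : Differentiable ℝ ψ)
    (hψsc : ∀ u ∈ X, ∀ u' ∈ X, ∀ t : ℝ, 0 ≤ t → t ≤ 1 →
      ψ (t • u + (1 - t) • u') ≤
        t * ψ u + (1 - t) * ψ u' - μ / 2 * (t * (1 - t) * ‖u - u'‖ ^ 2))
    (yprev v' v : E) (hyprev : yprev ∈ X) (hv' : v' ∈ X) (hv : v ∈ X)
    (x y : E)
    (hx : x = (Aprev / A) • yprev + (a / A) • v')
    (hy : y = (Aprev / A) • yprev + (a / A) • v) :
    A * (Φ y - Φ x - fderiv ℝ Φ x (y - x)) -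
        (ψ v - ψ v' - fderiv ℝ ψ v' (v - v')) ≤
      (1 / 2) * (L * a ^ 2 / A - μ) * ‖v - v'‖ ^ 2 := by
  have hApos : 0 < A := by linarith
  have hyx : y - x = (a / A) • (v - v') := by
    rw [hx, hy, smul_sub]; abel
  have hnyx : ‖y - x‖ = (a / A) * ‖v - v'‖ := by
    rw [hyx, norm_smul, Real.norm_eq_abs, abs_of_pos (by positivity)]
  have hdesc := agd_descent_lemma L Φ hΦd hΦsm x y
  have hbreg := agd_strong_bregman X μ ψ hψd hψsc v' v hv' hv
  have h1 : A * (Φ y - Φ x - fderiv ℝ Φ x (y - x)) ≤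
      A * (L / 2 * ‖y - x‖ ^ 2) := by
    exact mul_le_mul_of_nonneg_left hdesc (le_of_lt hApos)
  have h2 : A * (L / 2 * ‖y - x‖ ^ 2) = 1 / 2 * (L * a ^ 2 / A) * ‖v - v'‖ ^ 2 := by
    rw [hnyx]
    field_simp
  nlinarith [h1, h2, hbreg]
end

section
/- Let D > 0, 0 ≤ α < 1, and 0 < β ≤ 1 be reals, let k ≥ 1 be an integer, and let s : {1, …, k} → ℕ satisfy (D+1)·(s(t)+1) ≥ t for all 1 ≤ t ≤ k. Then ∑_{t=1}^{k} t^β/(s(t)+1)^{1−α} ≤ (D+1)^{1−α}·(k^{α+β}/(α+β) + k^{α+β−1}). -/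
/-!
The hypothesis gives `t / (s t + 1) ≤ D + 1`, so each term is at most
`(D + 1) ^ (1 - α) * t ^ (γ - 1)` with `γ = α + β`. The sum of `t ^ (γ - 1)` is then compared
with the telescoping increments of `t ↦ t ^ γ / γ`, using that `x ^ γ` lies below its tangent
lines when `γ ≤ 1` and above them when `γ ≥ 1` (Bernoulli's inequality): in the concave case
`t ^ (γ - 1)` is bounded by the increment over `[t - 1, t]`, in the convex case by the one over
`[t, t + 1]`, which costs the extra last term `k ^ (γ - 1)`.
-/

open Real Finset

theorem rpow_add_le_rpow_add_mul_rpow_sub_one {x h γ : ℝ} (hx : 0 < x) (hxh : -x ≤ h)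
    (hγ0 : 0 ≤ γ) (hγ1 : γ ≤ 1) : (x + h) ^ γ ≤ x ^ γ + γ * x ^ (γ - 1) * h := by
  have hs : -1 ≤ h / x := by rw [le_div_iff₀ hx]; linarith
  calc (x + h) ^ γ = x ^ γ * (1 + h / x) ^ γ := by
        rw [← mul_rpow hx.le (by linarith), mul_add, mul_one, mul_div_cancel₀ _ hx.ne']
    _ ≤ x ^ γ * (1 + γ * (h / x)) := by
        gcongr; exact rpow_one_add_le_one_add_mul_self hs hγ0 hγ1
    _ = x ^ γ + γ * x ^ (γ - 1) * h := by rw [rpow_sub_one hx.ne']; field_simp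

theorem rpow_add_mul_rpow_sub_one_le_rpow_add {x h γ : ℝ} (hx : 0 < x) (hxh : -x ≤ h)
    (hγ : 1 ≤ γ) : x ^ γ + γ * x ^ (γ - 1) * h ≤ (x + h) ^ γ := by
  have hs : -1 ≤ h / x := by rw [le_div_iff₀ hx]; linarith
  calc x ^ γ + γ * x ^ (γ - 1) * h = x ^ γ * (1 + γ * (h / x)) := by
        rw [rpow_sub_one hx.ne']; field_simp
    _ ≤ x ^ γ * (1 + h / x) ^ γ := by gcongr; exact one_add_mul_self_le_rpow_one_add hs hγ
    _ = (x + h) ^ γ := by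
        rw [← mul_rpow hx.le (by linarith), mul_add, mul_one, mul_div_cancel₀ _ hx.ne']

theorem sum_Icc_one_eq_sum_range {M : Type*} [AddCommMonoid M] (f : ℕ → M) (k : ℕ) :
    ∑ t ∈ Icc 1 k, f t = ∑ i ∈ range k, f (i + 1) := by
  rw [range_eq_Ico, sum_Ico_add' f 0 k 1]; rfl

theorem sum_Icc_rpow_sub_one_le_of_le_one {γ : ℝ} (hγ0 : 0 < γ) (hγ1 : γ ≤ 1) (k : ℕ) :
    ∑ t ∈ Icc 1 k, (t : ℝ) ^ (γ - 1) ≤ (k : ℝ) ^ γ / γ := by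
  set g : ℕ → ℝ := fun n => (n : ℝ) ^ γ / γ
  have hstep (i : ℕ) : ((i + 1 : ℕ) : ℝ) ^ (γ - 1) ≤ g (i + 1) - g i := by
    have := rpow_add_le_rpow_add_mul_rpow_sub_one (x := (i + 1 : ℕ)) (h := -1)
      (by positivity) (by simp) hγ0.le hγ1
    simp only [g, Nat.cast_add_one, add_neg_cancel_right] at this ⊢
    rw [← sub_div, le_div_iff₀ hγ0]
    linarith
  calc ∑ t ∈ Icc 1 k, (t : ℝ) ^ (γ - 1) ≤ ∑ i ∈ range k, (g (i + 1) - g i) := by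
        rw [sum_Icc_one_eq_sum_range]; exact sum_le_sum fun i _ => hstep i
    _ = g k - g 0 := sum_range_sub g k
    _ ≤ g k := sub_le_self _ (by positivity)

theorem sum_Icc_rpow_sub_one_le_of_one_le {γ : ℝ} (hγ1 : 1 ≤ γ) (k : ℕ) :
    ∑ t ∈ Icc 1 k, (t : ℝ) ^ (γ - 1) ≤ (k : ℝ) ^ γ / γ + (k : ℝ) ^ (γ - 1) := by
  have hγ0 : 0 < γ := zero_lt_one.trans_le hγ1
  set g : ℕ → ℝ := fun n => (n : ℝ) ^ γ / γ
  have hstep (i : ℕ) : ((i + 1 : ℕ) : ℝ) ^ (γ - 1) ≤ g (i + 2) - g (i + 1) := by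
    have := rpow_add_mul_rpow_sub_one_le_rpow_add (x := (i + 1 : ℕ)) (h := 1)
      (by positivity) (by linarith [(i + 1 : ℕ).cast_nonneg (α := ℝ)]) hγ1
    simp only [g, Nat.cast_add_one] at this ⊢
    rw [← sub_div, le_div_iff₀ hγ0]
    linarith
  obtain _ | m := k
  · simp only [Icc_eq_empty_of_lt zero_lt_one, sum_empty]; positivity
  calc ∑ t ∈ Icc 1 (m + 1), (t : ℝ) ^ (γ - 1)
      = ∑ i ∈ range m, ((i + 1 : ℕ) : ℝ) ^ (γ - 1) + ((m + 1 : ℕ) : ℝ) ^ (γ - 1) := by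
        rw [sum_Icc_one_eq_sum_range, sum_range_succ]
    _ ≤ ∑ i ∈ range m, (g (i + 2) - g (i + 1)) + ((m + 1 : ℕ) : ℝ) ^ (γ - 1) := by
        gcongr with i; exact hstep i
    _ = g (m + 1) - g 1 + ((m + 1 : ℕ) : ℝ) ^ (γ - 1) := by
        rw [sum_range_sub (fun n => g (n + 1)) m]
    _ ≤ g (m + 1) + ((m + 1 : ℕ) : ℝ) ^ (γ - 1) := by
        gcongr; exact sub_le_self _ (by positivity)

theorem sum_Icc_rpow_sub_one_le {γ : ℝ} (hγ : 0 < γ) (k : ℕ) :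
    ∑ t ∈ Icc 1 k, (t : ℝ) ^ (γ - 1) ≤ (k : ℝ) ^ γ / γ + (k : ℝ) ^ (γ - 1) := by
  rcases le_total γ 1 with hγ1 | hγ1
  · exact (sum_Icc_rpow_sub_one_le_of_le_one hγ hγ1 k).trans
      (le_add_of_nonneg_right (by positivity))
  · exact sum_Icc_rpow_sub_one_le_of_one_le hγ1 k

theorem rpow_div_rpow_le_mul_rpow_sub {a b c : ℝ} (ha : 0 < a) (hb : 0 < b) (hab : a ≤ c * b)
    {p : ℝ} (hp : 0 ≤ p) (q : ℝ) : a ^ q / b ^ p ≤ c ^ p * a ^ (q - p) := by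
  calc a ^ q / b ^ p = a ^ (q - p) * (a / b) ^ p := by
        rw [div_rpow ha.le hb.le, mul_div_assoc', ← rpow_add ha, sub_add_cancel]
    _ ≤ a ^ (q - p) * c ^ p := by gcongr; rwa [div_le_iff₀ hb]
    _ = c ^ p * a ^ (q - p) := mul_comm _ _

theorem sum_pow_div_stage_rpow_le_general
    (D α β : ℝ) (hD : 0 < D) (hα0 : 0 ≤ α) (hα1 : α < 1) (hβ0 : 0 < β)
    (k : ℕ) (s : ℕ → ℕ)
    (hs : ∀ t : ℕ, 1 ≤ t → t ≤ k → (t : ℝ) ≤ (D + 1) * ((s t : ℝ) + 1)) :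
    ∑ t ∈ Finset.Icc 1 k, (t : ℝ) ^ β / ((s t : ℝ) + 1) ^ (1 - α) ≤
      (D + 1) ^ (1 - α) *
        ((k : ℝ) ^ (α + β) / (α + β) + (k : ℝ) ^ (α + β - 1)) := by
  have hterm : ∀ t ∈ Icc 1 k,
      (t : ℝ) ^ β / ((s t : ℝ) + 1) ^ (1 - α) ≤
        (D + 1) ^ (1 - α) * (t : ℝ) ^ (α + β - 1) := by
    intro t ht
    obtain ⟨ht1, htk⟩ := mem_Icc.1 ht
    convert rpow_div_rpow_le_mul_rpow_sub (by positivity) (by positivity) (hs t ht1 htk)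
      (sub_nonneg.2 hα1.le) β using 3
    ring
  calc ∑ t ∈ Icc 1 k, (t : ℝ) ^ β / ((s t : ℝ) + 1) ^ (1 - α)
      ≤ ∑ t ∈ Icc 1 k, (D + 1) ^ (1 - α) * (t : ℝ) ^ (α + β - 1) := sum_le_sum hterm
    _ = (D + 1) ^ (1 - α) * ∑ t ∈ Icc 1 k, (t : ℝ) ^ (α + β - 1) := (mul_sum _ _ _).symm
    _ ≤ (D + 1) ^ (1 - α) * ((k : ℝ) ^ (α + β) / (α + β) + (k : ℝ) ^ (α + β - 1)) := by
      gcongr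
      exact sum_Icc_rpow_sub_one_le (by positivity) k

/-- If `(D+1)·(s(t)+1) ≥ t` for `1 ≤ t ≤ k`, then for `0 ≤ α < 1` and `0 < β ≤ 1`,
`∑_{t=1}^k t^β/(s(t)+1)^{1-α} ≤ (D+1)^{1-α}·(k^{α+β}/(α+β) + k^{α+β-1})`. -/
theorem sum_pow_div_stage_rpow_le
    (D α β : ℝ) (hD : 0 < D) (hα0 : 0 ≤ α) (hα1 : α < 1) (hβ0 : 0 < β) (hβ1 : β ≤ 1)
    (k : ℕ) (hk : 1 ≤ k) (s : ℕ → ℕ)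
    (hs : ∀ t : ℕ, 1 ≤ t → t ≤ k → (t : ℝ) ≤ (D + 1) * ((s t : ℝ) + 1)) :
    ∑ t ∈ Finset.Icc 1 k, (t : ℝ) ^ β / ((s t : ℝ) + 1) ^ (1 - α) ≤
      (D + 1) ^ (1 - α) *
        ((k : ℝ) ^ (α + β) / (α + β) + (k : ℝ) ^ (α + β - 1)) :=
  sum_pow_div_stage_rpow_le_general D α β hD hα0 hα1 hβ0 k s hs
end

section
/- Let α > 1 and D > 0 be reals and let s ≥ 1 be a real number. Then log( log(log((D+1)·(s+2)^α)) / log(log(s+2)) ) ≤ ( log α + log(D+1)/(α·log 3) ) / log(log(s+2)), where log denotes the natural logarithm. -/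
/-- For reals `α > 1`, `D > 0`, and `s ≥ 1`,
`log(log(log((D+1)·(s+2)^α)) / log(log(s+2))) ≤
  (log α + log(D+1)/(α·log 3)) / log(log(s+2))`. -/
theorem loglog_ratio_log_le (α D s : ℝ) (hα : 1 < α) (hD : 0 < D) (hs : 1 ≤ s) :
    Real.log
        (Real.log (Real.log ((D + 1) * (s + 2) ^ α)) / Real.log (Real.log (s + 2))) ≤
      (Real.log α + Real.log (D + 1) / (α * Real.log 3)) /
        Real.log (Real.log (s + 2)) := by
  have h3 : (3:ℝ) ≤ s + 2 := by linarith
  have hlog3 : 1 < Real.log 3 := by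
    rw [Real.lt_log_iff_exp_lt (by norm_num)]
    calc Real.exp 1 ≤ 2.7182818286 := Real.exp_one_lt_d9.le
      _ < 3 := by norm_num
  have hL3 : Real.log 3 ≤ Real.log (s + 2) := Real.log_le_log (by norm_num) h3
  set L := Real.log (s + 2) with hLdef
  have hL1 : 1 < L := lt_of_lt_of_le hlog3 hL3
  have hLpos : 0 < L := by linarith
  have hlogL : 0 < Real.log L := Real.log_pos hL1
  have hαpos : (0:ℝ) < α := by linarith
  have hD1 : (0:ℝ) < Real.log (D + 1) := Real.log_pos (by linarith)
  have hAeq : Real.log ((D + 1) * (s + 2) ^ α) = Real.log (D + 1) + α * L := by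
    rw [Real.log_mul (by linarith) (by positivity), Real.log_rpow (by linarith)]
  set A := Real.log ((D + 1) * (s + 2) ^ α) with hAdef
  have hAgL : L < A := by rw [hAeq]; nlinarith
  have hApos : 0 < A := lt_trans hLpos hAgL
  have hr1 : 1 < Real.log A / Real.log L := by
    rw [lt_div_iff₀ hlogL]
    simpa using Real.log_lt_log hLpos hAgL
  set c := Real.log (D + 1) / L with hcdef
  have hcpos : 0 < c := by positivity
  have step1 : Real.log (Real.log A / Real.log L) ≤ Real.log A / Real.log L - 1 :=
    Real.log_le_sub_one_of_pos (by linarith)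
  have step2 : Real.log A / Real.log L - 1 = Real.log (A / L) / Real.log L := by
    rw [Real.log_div (ne_of_gt hApos) (ne_of_gt hLpos)]
    field_simp
  have hALval : A / L = α + c := by
    rw [hAeq, hcdef]; field_simp; ring
  have step3 : Real.log (α + c) ≤ Real.log α + c / α := by
    have h1 : Real.log ((α + c) / α) ≤ (α + c) / α - 1 :=
      Real.log_le_sub_one_of_pos (by positivity)
    have h2 : Real.log ((α + c) / α) = Real.log (α + c) - Real.log α :=
      Real.log_div (by positivity) (ne_of_gt hαpos)
    have h3' : (α + c) / α - 1 = c / α := by field_simp; ring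
    linarith [h1, h2.symm.le, h3'.le]
  have step4 : c / α ≤ Real.log (D + 1) / (α * Real.log 3) := by
    rw [hcdef, div_div]
    apply div_le_div_of_nonneg_left hD1.le (by positivity)
    have : 0 < Real.log 3 := by linarith
    nlinarith
  calc Real.log (Real.log A / Real.log L)
      ≤ Real.log A / Real.log L - 1 := step1
    _ = Real.log (A / L) / Real.log L := step2
    _ = Real.log (α + c) / Real.log L := by rw [hALval]
    _ ≤ (Real.log α + Real.log (D + 1) / (α * Real.log 3)) / Real.log L := by
        gcongr
        linarith [step3, step4]
end

section
/- (Gradient of the Beckmann–McGuire–Winsten potential.) Let ℰ be a finite set of edges and let there be N players, where each player i has a finite set 𝒫_i of routes, each route p ∈ 𝒫_i being a subset of ℰ. For a strategy profile x = (x^i)_{i=1}^{N} with x^i ∈ ℝ^{𝒫_i}, define the load on edge e by ℓ_e(x) = ∑_{i=1}^{N} ∑_{p ∈ 𝒫_i} 1_{{e ∈ p}}·[x^i]_p. Let J_e : ℝ → ℝ be continuous for each e ∈ ℰ, and define the potential Φ(x) = ∑_{e ∈ ℰ} ∫_0^{ℓ_e(x)} J_e(τ) dτ. Then for every x, every player i,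 and every route p ∈ 𝒫_i, the partial derivative of Φ with respect to the coordinate [x^i]_p exists and equals ∑_{e ∈ p} J_e(ℓ_e(x)). -/
private lemma sum_update_sub {α : Type*} {β : α → Type*} [Fintype α] [DecidableEq α]
    (f : (a : α) → β a → ℝ) (s : ∀ a, β a) (q : α) (b : β q) :
    ∑ a, f a (Function.update s q b a)
      = (∑ a, f a (s a)) + (f q b - f q (s q)) := by
  have h : (fun a => f a (Function.update s q b a))
      = Function.update (fun a => f a (s a)) q (f q b) := by
    funext a
    rcases eq_or_ne a q with rfl | h
    · simp
    · simp [Function.update_of_ne h]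
  rw [h, Finset.sum_update_of_mem (Finset.mem_univ q),
    ← Finset.sum_erase_add Finset.univ _ (Finset.mem_univ q)]
  have : Finset.univ \ {q} = Finset.univ.erase q := by
    simp [Finset.erase_eq]
  rw [this]
  ring

/-- Gradient of the Beckmann–McGuire–Winsten potential: the partial derivative of
`Φ(x) = ∑_e ∫_0^{ℓ_e(x)} J_e(τ) dτ` with respect to the coordinate `[x^i]_p` exists
and equals the route cost `∑_{e ∈ p} J_e(ℓ_e(x))`. -/
theorem bmw_potential_partial_deriv
    {ε ι : Type*} [Fintype ε] [DecidableEq ε] [Fintype ι] [DecidableEq ι]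
    (P : ι → Type*) [∀ i, Fintype (P i)] [∀ i, DecidableEq (P i)]
    (route : ∀ i, P i → Finset ε)
    (J : ε → ℝ → ℝ) (hJ : ∀ e, Continuous (J e))
    (load : (∀ i, P i → ℝ) → ε → ℝ)
    (hload : ∀ x e, load x e = ∑ i, ∑ p, if e ∈ route i p then x i p else 0)
    (Φ : (∀ i, P i → ℝ) → ℝ)
    (hΦ : ∀ x, Φ x = ∑ e, ∫ τ in (0:ℝ)..(load x e), J e τ)
    (x : ∀ i, P i → ℝ) (i : ι) (p : P i) :
    HasDerivAt
      (fun c : ℝ => Φ (Function.update x i (Function.update (x i) p c)))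
      (∑ e ∈ route i p, J e (load x e)) (x i p) := by
  have key : ∀ (c : ℝ) (e : ε),
      load (Function.update x i (Function.update (x i) p c)) e
        = load x e + (if e ∈ route i p then c - x i p else 0) := by
    intro c e
    rw [hload, hload]
    rw [sum_update_sub (fun i' (u : P i' → ℝ) => ∑ p', if e ∈ route i' p' then u p' else 0) x i]
    rw [sum_update_sub (fun p' (u : ℝ) => if e ∈ route i p' then u else 0) (x i) p c]
    by_cases h : e ∈ route i p <;> simp [h]
  -- rewrite the function
  have hfun : (fun c : ℝ => Φ (Function.update x i (Function.update (x i) p c)))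
      = fun c : ℝ => ∑ e, ∫ τ in (0:ℝ)..(load x e + (if e ∈ route i p then c - x i p else 0)),
          J e τ := by
    funext c
    rw [hΦ]
    exact Finset.sum_congr rfl fun e _ => by rw [key]
  rw [hfun]
  have hder : ∀ e : ε,
      HasDerivAt (fun c : ℝ => ∫ τ in (0:ℝ)..(load x e + (if e ∈ route i p then c - x i p else 0)),
          J e τ)
        (if e ∈ route i p then J e (load x e) else 0) (x i p) := by
    intro e
    have inner : HasDerivAt
        (fun c : ℝ => load x e + (if e ∈ route i p then c - x i p else 0))
        (if e ∈ route i p then 1 else 0) (x i p) := by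
      by_cases h : e ∈ route i p
      · simp only [h, if_true]
        exact ((hasDerivAt_id (x i p)).sub_const _).const_add _
      · simp only [h, if_false]
        simpa using hasDerivAt_const (x i p) (load x e + 0)
    have ftc : HasDerivAt (fun u : ℝ => ∫ τ in (0:ℝ)..u, J e τ) (J e (load x e)) (load x e) :=
      intervalIntegral.integral_hasDerivAt_right
        ((hJ e).intervalIntegrable 0 (load x e))
        ((hJ e).stronglyMeasurableAtFilter _ _)
        (hJ e).continuousAt
    have := HasDerivAt.comp (x i p) (by simpa using ftc) inner
    refine this.congr_deriv ?_
    by_cases h : e ∈ route i p <;> simp [h]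
  have hsum := HasDerivAt.fun_sum (fun e (_ : e ∈ (Finset.univ : Finset ε)) => hder e)
  refine hsum.congr_deriv ?_
  rw [Finset.sum_ite_mem]
  simp
end
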